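/- Let β ≥ 0, h ∈ ℝ, let Λ ⊂ ℤ³ be finite, let x ∈ Λ, and let A ⊂ {−1,+1}^Λ be an increasing event. Set A_x^+ := {σ : σ^{x+} ∈ A} and A_x^− := {σ : σ^{x−} ∈ A}. Then, with all probabilities and covariances taken under P_{Λ,β,h}: (i) if A_x^− = ∅ and P(x is pivotal for A) ≠ 0, then P(x is pivotal for A) = ⟨σ_x;I_A⟩ / (2 P(σ_x = −1) · P(σ_x = +1 | x is pivotal for A)); (ii) if A_x^− ≠ ∅, then P(x is pivotal for A) = ⟨σ_x;I_A⟩/(2 P(σ_x = +1 | A_x^+)) + ⟨σ_x;I_A⟩/(2 P(σ_x = −1 | A_x^−)) − ⟨σ_x;I_{A_x^+}⟩/(2 P(σ_x = +1 | A)) − ⟨σ_x;I_{A_x^−}⟩/(2 P(σ_x = −1 | A)). -/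

import Mathlib

open scoped BigOperators
open Classical Filter MeasureTheory

namespace Ising

/-- Vertices of the lattice `T×Z` are the points of `ℤ³`. -/
abbrev V : Type := ℤ × ℤ × ℤ

/-- The eight difference vectors defining adjacency in `T×Z`:
`±(1,0,0), ±(0,1,0), ±(1,1,0), ±(0,0,1)`. -/
def dirs : Finset V :=
  {(1,0,0), (-1,0,0), (0,1,0), (0,-1,0), (1,1,0), (-1,-1,0), (0,0,1), (0,0,-1)}

/-- Adjacency in the lattice `T×Z`. -/
def adj (x y : V) : Prop := y - x ∈ dirs

/-- The neighbours of a vertex in `T×Z`. -/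
def nbrs (x : V) : Finset V := dirs.image (fun d => x + d)

/-- Euclidean distance on `ℤ³`. -/
noncomputable def edist (x y : V) : ℝ :=
  Real.sqrt ((((x.1 - y.1) ^ 2 + (x.2.1 - y.2.1) ^ 2 + (x.2.2 - y.2.2) ^ 2 : ℤ) : ℝ))

/-- Spin configurations on all of `ℤ³`; `true` codes `+1` and `false` codes `-1`. -/
abbrev Config : Type := V → Bool

/-- The `±1`-valued spin at a vertex. -/
noncomputable def spin (σ : Config) (x : V) : ℝ := if σ x then 1 else -1

/-- Extension of a configuration on a finite `Λ` by `-1` (i.e. `false`) outside `Λ`. -/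
noncomputable def extend (Λ : Finset V) (σ : Λ → Bool) : Config :=
  fun v => if h : v ∈ Λ then σ ⟨v, h⟩ else false

/-- (Negative of the) Hamiltonian on `Λ` with inverse temperature `β`, boundary
condition `η : V → ℤ` (only values outside `Λ` matter) and field `J : V → ℝ`
(only values on `Λ` matter): the edge sum is over ordered pairs, divided by two. -/
noncomputable def energy (Λ : Finset V) (β : ℝ) (η : V → ℤ) (J : V → ℝ) (σ : Config) : ℝ :=
  β * ((∑ x ∈ Λ, ∑ y ∈ Λ, if adj x y then spin σ x * spin σ y else 0) / 2)
    + β * (∑ x ∈ Λ, ∑ y ∈ nbrs x, if y ∉ Λ then spin σ x * ((η y : ℤ) : ℝ) else 0)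
    + ∑ x ∈ Λ, J x * spin σ x

/-- Boltzmann weight. -/
noncomputable def weight (Λ : Finset V) (β : ℝ) (η : V → ℤ) (J : V → ℝ) (σ : Config) : ℝ :=
  Real.exp (energy Λ β η J σ)

/-- The partition function. -/
noncomputable def Zpart (Λ : Finset V) (β : ℝ) (η : V → ℤ) (J : V → ℝ) : ℝ :=
  ∑ σ : Λ → Bool, weight Λ β η J (extend Λ σ)

/-- The finite-volume Ising probability of an event `A`. -/
noncomputable def prob (Λ : Finset V) (β : ℝ) (η : V → ℤ) (J : V → ℝ) (A : Set Config) : ℝ :=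
  (∑ σ : Λ → Bool, if extend Λ σ ∈ A then weight Λ β η J (extend Λ σ) else 0) / Zpart Λ β η J

/-- Finite-volume expectation `⟨f⟩`. -/
noncomputable def expec (Λ : Finset V) (β : ℝ) (η : V → ℤ) (J : V → ℝ) (f : Config → ℝ) : ℝ :=
  (∑ σ : Λ → Bool, f (extend Λ σ) * weight Λ β η J (extend Λ σ)) / Zpart Λ β η J

/-- Finite-volume covariance `⟨f;g⟩ = ⟨fg⟩ - ⟨f⟩⟨g⟩`. -/
noncomputable def covar (Λ : Finset V) (β : ℝ) (η : V → ℤ) (J : V → ℝ) (f g : Config → ℝ) : ℝ :=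
  expec Λ β η J (fun σ => f σ * g σ) - expec Λ β η J f * expec Λ β η J g

/-- Conditional probability `P(A | B)`. -/
noncomputable def condProb (Λ : Finset V) (β : ℝ) (η : V → ℤ) (J : V → ℝ)
    (A B : Set Config) : ℝ :=
  prob Λ β η J (A ∩ B) / prob Λ β η J B

/-- Indicator function of an event. -/
noncomputable def ind (A : Set Config) : Config → ℝ := fun σ => if σ ∈ A then 1 else 0

/-- The box `B_n = [-n,n]³ ∩ ℤ³`. -/
noncomputable def box (n : ℕ) : Finset V :=
  Finset.Icc (-(n : ℤ)) (n : ℤ) ×ˢ (Finset.Icc (-(n : ℤ)) (n : ℤ) ×ˢ Finset.Icc (-(n : ℤ)) (n : ℤ))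

/-- The translated box `B_m(x) = x + B_m`. -/
noncomputable def boxAt (m : ℕ) (x : V) : Finset V := (box m).image (fun v => x + v)

/-- The (inner) boundary `∂Λ` of a set of vertices. -/
noncomputable def bdry (Λ : Finset V) : Finset V := Λ.filter (fun x => ∃ y ∈ nbrs x, y ∉ Λ)

/-- An event is increasing if it is preserved by raising spins. -/
def Increasing (A : Set Config) : Prop :=
  ∀ σ τ : Config, σ ∈ A → (∀ v, σ v ≤ τ v) → τ ∈ A

/-- `A ∈ F_Δ`: the event `A` is determined by the spins in `Δ`. -/
def DependsOn (A : Set Config) (Δ : Set V) : Prop :=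
  ∀ σ τ : Config, (∀ v ∈ Δ, σ v = τ v) → (σ ∈ A ↔ τ ∈ A)

/-- The event `{A occurs on Δ}`. -/
def occursOn (A : Set Config) (Δ : Set V) : Set Config :=
  {σ | ∀ τ : Config, (∀ v ∈ Δ, τ v = σ v) → τ ∈ A}

/-- `σ^{Δ+}` (for `b = true`) resp. `σ^{Δ-}` (for `b = false`). -/
noncomputable def forceOn (σ : Config) (Δ : Set V) (b : Bool) : Config :=
  fun v => if v ∈ Δ then b else σ v

/-- The event `{Δ is pivotal for A}`. -/
def pivotal (A : Set Config) (Δ : Set V) : Set Config :=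
  {σ | forceOn σ Δ true ∈ A ∧ forceOn σ Δ false ∉ A}

/-- The event `{x is +pivotal for A}`. -/
def plusPivotal (A : Set Config) (x : V) : Set Config :=
  pivotal A {x} ∩ {σ | σ x = true}

/-- The slab `S_k = ℤ² × {0,…,k}`. -/
def slab (k : ℕ) : Set V := {x | 0 ≤ x.2.2 ∧ x.2.2 ≤ (k : ℤ)}

/-- The event `{∃ LR +crossing in B_n ∩ S_k}`: a path of `+` spins inside `B_n ∩ S_k`
meeting both hyperplanes `{x(1) = -n}` and `{x(1) = n}`. -/
def crossing (n k : ℕ) : Set Config :=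
  {σ | ∃ l : List V, l.Chain' adj ∧ (∀ v ∈ l, v ∈ box n ∧ v ∈ slab k ∧ σ v = true) ∧
      (∃ u ∈ l, u.1 = -(n : ℤ)) ∧ (∃ u ∈ l, u.1 = (n : ℤ))}

/-- `Λ_{(1)}`: the vertices of `Λ` with third coordinate `1`. -/
def lamOne (Λ : Finset V) : Finset V := Λ.filter (fun x => x.2.2 = 1)

/-- The Bernoulli(p) weight `P_p(ω) = p^{|ω⁻¹(1)|}(1-p)^{|ω⁻¹(0)|}`. -/
noncomputable def bern (p : ℝ) (Δ : Finset V) (ω : Δ → Bool) : ℝ :=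
  ∏ y : Δ, (if ω y then p else 1 - p)

/-- `ω⁻¹(1)` as a set of vertices. -/
def openSet (Δ : Finset V) (ω : Δ → Bool) : Set V :=
  {v | ∃ h : v ∈ Δ, ω ⟨v, h⟩ = true}

/-- The measure `μ_{Λ,p,h}` of an event `A` (with free boundary conditions,
inverse temperature `β`, vertex-percolation parameter `p` and field `h`). -/
noncomputable def mu (Λ : Finset V) (β p h : ℝ) (A : Set Config) : ℝ :=
  ∑ ω : lamOne Λ → Bool,
    bern p (lamOne Λ) ω *
      prob Λ β (fun _ => 0) (fun _ => h) (occursOn A (slab 0 ∪ openSet (lamOne Λ) ω))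

/-- The field equal to `h + t` on `∂B_m(x) ∩ Λ` and to `h` elsewhere. -/
noncomputable def gfield (Λ : Finset V) (m : ℕ) (x : V) (h t : ℝ) : V → ℝ :=
  fun y => if y ∈ bdry (boxAt m x) ∩ Λ then h + t else h

/-- Characterization of the regime `β ∈ [0, β_c(T×Z))`: exponential decay of the
two-point function at zero field, uniformly in the volume. -/
def expDecay (β : ℝ) : Prop :=
  ∃ C > (0 : ℝ), ∃ c > (0 : ℝ), ∀ Λ : Finset V, ∀ x ∈ Λ, ∀ y ∈ Λ,
    expec Λ β (fun _ => 0) (fun _ => 0) (fun σ => spin σ x * spin σ y)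
      ≤ C * Real.exp (-c * edist x y)

/-- There is a path of spins `b` (in `T×Z`) from `x` to `y` in the configuration `σ`. -/
def pathIn (σ : Config) (b : Bool) (x y : V) : Prop :=
  ∃ l : List V, l.Chain' adj ∧ l.head? = some x ∧ l.getLast? = some y ∧ ∀ v ∈ l, σ v = b

/-- The `b`-cluster of a vertex. -/
def cluster (σ : Config) (b : Bool) (x : V) : Set V := {y | pathIn σ b x y}

/-- The set `{x : σ_x = b}` has exactly one infinite connected component in `T×Z`. -/
def uniqueInfCluster (σ : Config) (b : Bool) : Prop :=
  ∃ x : V, σ x = b ∧ (cluster σ b x).Infinite ∧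
    ∀ y : V, σ y = b → (cluster σ b y).Infinite → cluster σ b y = cluster σ b x

/-- The event `H(x,ω)` resp. `H(y,ω^{(y)})` at the level of open sets:
`{(crossing n 1) occurs on S_0 ∪ S ∪ {x}}`. -/
def Hx (n : ℕ) (S : Set V) (x : V) : Set Config :=
  occursOn (crossing n 1) (slab 0 ∪ S ∪ {x})



/-! ### Auxiliary definitions and lemmas -/

/-- The unnormalized sum of Boltzmann weights over configurations in an event. -/
noncomputable def S (Λ : Finset V) (β : ℝ) (η : V → ℤ) (J : V → ℝ) (A : Set Config) : ℝ :=
  ∑ σ : Λ → Bool, if extend Λ σ ∈ A then weight Λ β η J (extend Λ σ) else 0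

section Helpers

variable (Λ : Finset V) (β : ℝ) (η : V → ℤ) (J : V → ℝ)

lemma S_nonneg (A : Set Config) : 0 ≤ S Λ β η J A :=
  Finset.sum_nonneg fun σ _ => by
    by_cases hσ : extend Λ σ ∈ A <;> simp [hσ, (Real.exp_pos _).le, weight]

lemma S_pos {A : Set Config} (σ₀ : Λ → Bool) (h : extend Λ σ₀ ∈ A) : 0 < S Λ β η J A := by
  have h1 : (if extend Λ σ₀ ∈ A then weight Λ β η J (extend Λ σ₀) else 0) ≤ S Λ β η J A := by
    apply Finset.single_le_sum
      (f := fun σ => if extend Λ σ ∈ A then weight Λ β η J (extend Λ σ) else 0)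
      (fun σ _ => by by_cases hσ : extend Λ σ ∈ A <;> simp [hσ, (Real.exp_pos _).le, weight])
      (Finset.mem_univ σ₀)
  rw [if_pos h] at h1
  exact lt_of_lt_of_le (Real.exp_pos _) h1

lemma exists_of_S_ne_zero {A : Set Config} (h : S Λ β η J A ≠ 0) :
    ∃ σ : Λ → Bool, extend Λ σ ∈ A := by
  by_contra hc
  push_neg at hc
  exact h (Finset.sum_eq_zero fun σ _ => by rw [if_neg (hc σ)])

lemma Zpart_pos : 0 < Zpart Λ β η J :=
  Finset.sum_pos (fun σ _ => Real.exp_pos _) Finset.univ_nonempty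

lemma prob_eq (A : Set Config) : prob Λ β η J A = S Λ β η J A / Zpart Λ β η J := rfl

lemma S_split (A B : Set Config) :
    S Λ β η J A = S Λ β η J (A ∩ B) + S Λ β η J (A ∩ Bᶜ) := by
  unfold S
  rw [← Finset.sum_add_distrib]
  refine Finset.sum_congr rfl fun σ _ => ?_
  by_cases h1 : extend Λ σ ∈ A <;> by_cases h2 : extend Λ σ ∈ B <;>
    simp [Set.mem_inter_iff, Set.mem_compl_iff, h1, h2]

lemma S_congr {A B : Set Config} (h : A = B) : S Λ β η J A = S Λ β η J B := by rw [h]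

lemma expec_ind (A : Set Config) : expec Λ β η J (ind A) = S Λ β η J A / Zpart Λ β η J := by
  unfold expec S ind
  congr 1
  refine Finset.sum_congr rfl fun σ _ => ?_
  by_cases hA : extend Λ σ ∈ A <;> simp [hA]

lemma expec_spin (x : V) :
    expec Λ β η J (fun σ => spin σ x) =
      (S Λ β η J {σ : Config | σ x = true} - S Λ β η J {σ : Config | σ x = false}) /
        Zpart Λ β η J := by
  unfold expec S
  rw [← Finset.sum_sub_distrib]
  congr 1
  refine Finset.sum_congr rfl fun σ _ => ?_
  by_cases hb : extend Λ σ x = true <;>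
    simp [spin, Set.mem_setOf_eq, hb, Bool.not_eq_true] at * <;> simp [hb]

lemma expec_spin_ind (x : V) (A : Set Config) :
    expec Λ β η J (fun σ => spin σ x * ind A σ) =
      (S Λ β η J (A ∩ {σ : Config | σ x = true}) -
          S Λ β η J (A ∩ {σ : Config | σ x = false})) / Zpart Λ β η J := by
  unfold expec S ind
  rw [← Finset.sum_sub_distrib]
  congr 1
  refine Finset.sum_congr rfl fun σ _ => ?_
  by_cases hA : extend Λ σ ∈ A <;> by_cases hb : extend Λ σ x = true <;>
    simp [spin, Set.mem_inter_iff, Set.mem_setOf_eq, hA, hb, Bool.not_eq_true] at * <;>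
    simp [hA, hb]

lemma covar_spin_ind (x : V) (A : Set Config) :
    covar Λ β η J (fun σ => spin σ x) (ind A) =
      (S Λ β η J (A ∩ {σ : Config | σ x = true}) -
          S Λ β η J (A ∩ {σ : Config | σ x = false})) / Zpart Λ β η J -
        ((S Λ β η J {σ : Config | σ x = true} - S Λ β η J {σ : Config | σ x = false}) /
            Zpart Λ β η J) * (S Λ β η J A / Zpart Λ β η J) := by
  simp only [covar]
  rw [expec_spin_ind, expec_spin, expec_ind]

lemma condProb_eq (A B : Set Config) :
    condProb Λ β η J A B = S Λ β η J (A ∩ B) / S Λ β η J B := by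
  unfold condProb
  rw [prob_eq, prob_eq, div_div_div_cancel_right₀ (Zpart_pos Λ β η J).ne']

lemma Zpart_eq (x : V) :
    Zpart Λ β η J =
      S Λ β η J {σ : Config | σ x = true} + S Λ β η J {σ : Config | σ x = false} := by
  have hsp := S_split Λ β η J Set.univ {σ : Config | σ x = true}
  have h1 : S Λ β η J Set.univ = Zpart Λ β η J := by
    unfold S Zpart; exact Finset.sum_congr rfl fun σ _ => by simp
  have h2 : Set.univ ∩ {σ : Config | σ x = true} = {σ : Config | σ x = true} := by simp
  have h3 : Set.univ ∩ {σ : Config | σ x = true}ᶜ = {σ : Config | σ x = false} := by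
    ext σ; simp [Set.mem_setOf_eq]
  rw [h1, h2, h3] at hsp
  exact hsp

end Helpers

lemma forceOn_eq_self {σ : Config} {x : V} {b : Bool} (h : σ x = b) :
    forceOn σ {x} b = σ := by
  funext v
  by_cases hv : v = x <;> simp [forceOn, Set.mem_singleton_iff, hv, h.symm]

lemma extend_update (Λ : Finset V) (x : V) (hx : x ∈ Λ) (σ : Λ → Bool) (b : Bool) :
    extend Λ (Function.update σ ⟨x, hx⟩ b) = forceOn (extend Λ σ) {x} b := by
  funext v
  by_cases hv : v ∈ Λ
  · by_cases hvx : v = x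
    · subst hvx
      simp [extend, forceOn, hv, Function.update, Set.mem_singleton_iff]
    · simp [extend, forceOn, hv, Function.update, Set.mem_singleton_iff, hvx,
        Subtype.ext_iff]
  · have hvx : v ≠ x := fun hh => hv (hh ▸ hx)
    simp [extend, forceOn, hv, Set.mem_singleton_iff, hvx]

lemma forceOn_le' (σ : Config) (x : V) :
    ∀ v, forceOn σ {x} false v ≤ forceOn σ {x} true v := by
  intro v
  by_cases hv : v = x <;> simp [forceOn, Set.mem_singleton_iff, hv]

lemma le_forceOn_true (σ : Config) (x : V) : ∀ v, σ v ≤ forceOn σ {x} true v := by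
  intro v
  by_cases hv : v = x <;> simp [forceOn, Set.mem_singleton_iff, hv]

lemma alg1 (u v sp sm : ℝ) (hu : u ≠ 0) (hsm : sm ≠ 0) (hZ : sp + sm ≠ 0) :
    v / (sp + sm) =
      (u / (sp + sm) - (sp - sm) / (sp + sm) * (u / (sp + sm))) /
        (2 * (sm / (sp + sm)) * (u / v)) := by
  field_simp
  ring

lemma alg2 (a b c d sp sm : ℝ) (ha : a ≠ 0) (hd : d ≠ 0)
    (hab : a + b ≠ 0) (hcd : c + d ≠ 0) (had : a + d ≠ 0) (hZ : sp + sm ≠ 0) :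
    (a + b - (c + d)) / (sp + sm) =
      ((a - d) / (sp + sm) - (sp - sm) / (sp + sm) * ((a + d) / (sp + sm))) /
          (2 * (a / (a + b))) +
        ((a - d) / (sp + sm) - (sp - sm) / (sp + sm) * ((a + d) / (sp + sm))) /
          (2 * (d / (c + d))) -
        ((a - b) / (sp + sm) - (sp - sm) / (sp + sm) * ((a + b) / (sp + sm))) /
          (2 * (a / (a + d))) -
        ((c - d) / (sp + sm) - (sp - sm) / (sp + sm) * ((c + d) / (sp + sm))) /
          (2 * (d / (a + d))) := by
  field_simp
  ring


theorem statement18 (β : ℝ) (hβ0 : 0 ≤ β) (h : ℝ) (Λ : Finset V) (x : V) (hx : x ∈ Λ)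
    (A : Set Config) (hInc : Increasing A) (hdep : DependsOn A ↑Λ) :
    ((∀ σ : Config, forceOn σ {x} false ∉ A) →
      prob Λ β (fun _ => 0) (fun _ => h) (pivotal A {x}) ≠ 0 →
      prob Λ β (fun _ => 0) (fun _ => h) (pivotal A {x}) =
        covar Λ β (fun _ => 0) (fun _ => h) (fun σ => spin σ x) (ind A) /
          (2 * prob Λ β (fun _ => 0) (fun _ => h) {σ : Config | σ x = false} *
            condProb Λ β (fun _ => 0) (fun _ => h) {σ : Config | σ x = true}
              (pivotal A {x}))) ∧
    ((∃ σ : Config, forceOn σ {x} false ∈ A) →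
      prob Λ β (fun _ => 0) (fun _ => h) (pivotal A {x}) =
        covar Λ β (fun _ => 0) (fun _ => h) (fun σ => spin σ x) (ind A) /
          (2 * condProb Λ β (fun _ => 0) (fun _ => h) {σ : Config | σ x = true}
            {σ : Config | forceOn σ {x} true ∈ A}) +
        covar Λ β (fun _ => 0) (fun _ => h) (fun σ => spin σ x) (ind A) /
          (2 * condProb Λ β (fun _ => 0) (fun _ => h) {σ : Config | σ x = false}
            {σ : Config | forceOn σ {x} false ∈ A}) -
        covar Λ β (fun _ => 0) (fun _ => h) (fun σ => spin σ x)
            (ind {σ : Config | forceOn σ {x} true ∈ A}) /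
          (2 * condProb Λ β (fun _ => 0) (fun _ => h) {σ : Config | σ x = true} A) -
        covar Λ β (fun _ => 0) (fun _ => h) (fun σ => spin σ x)
            (ind {σ : Config | forceOn σ {x} false ∈ A}) /
          (2 * condProb Λ β (fun _ => 0) (fun _ => h) {σ : Config | σ x = false} A)) := by
  have hcompl : ({σ : Config | σ x = true} : Set Config)ᶜ = {σ : Config | σ x = false} := by
    ext σ; simp
  have hZ := Zpart_pos Λ β (fun _ => (0 : ℤ)) (fun _ => h)
  have hZeq := Zpart_eq Λ β (fun _ => (0 : ℤ)) (fun _ => h) x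
  have hZ' : S Λ β (fun _ => 0) (fun _ => h) {σ : Config | σ x = true} +
      S Λ β (fun _ => 0) (fun _ => h) {σ : Config | σ x = false} ≠ 0 := by
    rw [← hZeq]; exact hZ.ne'
  constructor
  · -- Case (i): A⁻ = ∅
    intro hAm hne
    have ePl : A ∩ {σ : Config | σ x = true} =
        pivotal A {x} ∩ {σ : Config | σ x = true} := by
      ext σ
      simp only [Set.mem_inter_iff, Set.mem_setOf_eq, pivotal]
      constructor
      · rintro ⟨h1, h2⟩
        exact ⟨⟨by rwa [forceOn_eq_self h2], hAm σ⟩, h2⟩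
      · rintro ⟨⟨h1, _⟩, h2⟩
        exact ⟨by rwa [forceOn_eq_self h2] at h1, h2⟩
    have eMi : A ∩ {σ : Config | σ x = false} = (∅ : Set Config) := by
      ext σ
      simp only [Set.mem_inter_iff, Set.mem_setOf_eq, Set.mem_empty_iff_false, iff_false,
        not_and]
      intro h1 h2
      exact hAm σ (by rwa [forceOn_eq_self h2])
    have hSMi0 : S Λ β (fun _ => 0) (fun _ => h) (A ∩ {σ : Config | σ x = false}) = 0 := by
      rw [S_congr _ _ _ _ eMi]; simp [S]
    have hSA : S Λ β (fun _ => 0) (fun _ => h) A =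
        S Λ β (fun _ => 0) (fun _ => h) (pivotal A {x} ∩ {σ : Config | σ x = true}) := by
      rw [S_split Λ β (fun _ => 0) (fun _ => h) A {σ : Config | σ x = true}, hcompl,
        hSMi0, S_congr _ _ _ _ ePl, add_zero]
    have hSpivne : S Λ β (fun _ => 0) (fun _ => h) (pivotal A {x}) ≠ 0 := by
      rw [prob_eq] at hne
      intro h0; rw [h0] at hne; simp at hne
    obtain ⟨σ', hσ'⟩ := exists_of_S_ne_zero Λ β (fun _ => 0) (fun _ => h) hSpivne
    have hupd : extend Λ (Function.update σ' ⟨x, hx⟩ true) =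
        forceOn (extend Λ σ') {x} true := extend_update Λ x hx σ' true
    have hx2 : extend Λ (Function.update σ' ⟨x, hx⟩ true) x = true := by
      rw [hupd]; simp [forceOn]
    have hmem : extend Λ (Function.update σ' ⟨x, hx⟩ true) ∈
        pivotal A {x} ∩ {σ : Config | σ x = true} := by
      refine ⟨⟨?_, hAm _⟩, hx2⟩
      rw [forceOn_eq_self hx2, hupd]
      exact hσ'.1
    have hu : 0 < S Λ β (fun _ => 0) (fun _ => h)
        (pivotal A {x} ∩ {σ : Config | σ x = true}) :=
      S_pos _ _ _ _ _ hmem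
    have hsm : 0 < S Λ β (fun _ => 0) (fun _ => h) {σ : Config | σ x = false} := by
      apply S_pos Λ β (fun _ => 0) (fun _ => h) (fun _ => false)
      show extend Λ (fun _ => false) x = false
      simp [extend]
    rw [prob_eq, covar_spin_ind, condProb_eq, prob_eq,
      S_congr _ _ _ _ (Set.inter_comm ({σ : Config | σ x = true}) (pivotal A {x})),
      hSMi0, S_congr _ _ _ _ ePl, hSA, sub_zero, hZeq]
    exact alg1 _ _ _ _ hu.ne' hsm.ne' hZ'
  · -- Case (ii): A⁻ ≠ ∅
    rintro ⟨σw, hσw⟩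
    set Ap : Set Config := {σ : Config | forceOn σ {x} true ∈ A} with hAp
    set Am : Set Config := {σ : Config | forceOn σ {x} false ∈ A} with hAmdef
    have e1 : A ∩ {σ : Config | σ x = true} = Ap ∩ {σ : Config | σ x = true} := by
      ext σ
      simp only [Set.mem_inter_iff, Set.mem_setOf_eq, hAp]
      constructor
      · rintro ⟨h1, h2⟩; exact ⟨by rwa [forceOn_eq_self h2], h2⟩
      · rintro ⟨h1, h2⟩; exact ⟨by rwa [forceOn_eq_self h2] at h1, h2⟩
    have e2 : A ∩ {σ : Config | σ x = false} = Am ∩ {σ : Config | σ x = false} := by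
      ext σ
      simp only [Set.mem_inter_iff, Set.mem_setOf_eq, hAmdef]
      constructor
      · rintro ⟨h1, h2⟩; exact ⟨by rwa [forceOn_eq_self h2], h2⟩
      · rintro ⟨h1, h2⟩; exact ⟨by rwa [forceOn_eq_self h2] at h1, h2⟩
    have esub : Ap ∩ Am = Am := by
      apply Set.inter_eq_right.mpr
      intro σ hσ
      exact hInc _ _ hσ (forceOn_le' σ x)
    have epiv : pivotal A {x} = Ap ∩ Amᶜ := by
      ext σ
      simp [pivotal, hAp, hAmdef, Set.mem_inter_iff, Set.mem_compl_iff, Set.mem_setOf_eq]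
    have hSpiv : S Λ β (fun _ => 0) (fun _ => h) (pivotal A {x}) =
        S Λ β (fun _ => 0) (fun _ => h) Ap - S Λ β (fun _ => 0) (fun _ => h) Am := by
      have hsp := S_split Λ β (fun _ => 0) (fun _ => h) Ap Am
      rw [S_congr _ _ _ _ esub, ← epiv] at hsp
      linarith
    have hSAp : S Λ β (fun _ => 0) (fun _ => h) Ap =
        S Λ β (fun _ => 0) (fun _ => h) (Ap ∩ {σ : Config | σ x = true}) +
        S Λ β (fun _ => 0) (fun _ => h) (Ap ∩ {σ : Config | σ x = false}) := by
      rw [S_split Λ β (fun _ => 0) (fun _ => h) Ap {σ : Config | σ x = true}, hcompl]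
    have hSAm : S Λ β (fun _ => 0) (fun _ => h) Am =
        S Λ β (fun _ => 0) (fun _ => h) (Am ∩ {σ : Config | σ x = true}) +
        S Λ β (fun _ => 0) (fun _ => h) (Am ∩ {σ : Config | σ x = false}) := by
      rw [S_split Λ β (fun _ => 0) (fun _ => h) Am {σ : Config | σ x = true}, hcompl]
    have hSA : S Λ β (fun _ => 0) (fun _ => h) A =
        S Λ β (fun _ => 0) (fun _ => h) (Ap ∩ {σ : Config | σ x = true}) +
        S Λ β (fun _ => 0) (fun _ => h) (Am ∩ {σ : Config | σ x = false}) := by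
      rw [S_split Λ β (fun _ => 0) (fun _ => h) A {σ : Config | σ x = true}, hcompl,
        S_congr _ _ _ _ e1, S_congr _ _ _ _ e2]
    -- positivity of the corner sums
    set σr : Λ → Bool := fun v => forceOn σw {x} false v.1 with hσr
    have hagree : ∀ v ∈ (↑Λ : Set V), forceOn σw {x} false v = extend Λ σr v := by
      intro v hv
      simp only [Finset.coe_sort_coe, Finset.mem_coe] at hv
      simp [extend, hv, hσr]
    have hτA : extend Λ σr ∈ A := (hdep _ _ hagree).mp hσw
    have hτx : extend Λ σr x = false := by
      simp [extend, hx, hσr, forceOn]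
    have hmemd : extend Λ σr ∈ Am ∩ {σ : Config | σ x = false} :=
      ⟨by show forceOn (extend Λ σr) {x} false ∈ A; rwa [forceOn_eq_self hτx], hτx⟩
    have hd : 0 < S Λ β (fun _ => 0) (fun _ => h) (Am ∩ {σ : Config | σ x = false}) :=
      S_pos _ _ _ _ _ hmemd
    have hup : extend Λ (Function.update σr ⟨x, hx⟩ true) =
        forceOn (extend Λ σr) {x} true := extend_update Λ x hx σr true
    have hτ'x : extend Λ (Function.update σr ⟨x, hx⟩ true) x = true := by
      rw [hup]; simp [forceOn]
    have hmema : extend Λ (Function.update σr ⟨x, hx⟩ true) ∈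
        Ap ∩ {σ : Config | σ x = true} := by
      refine ⟨?_, hτ'x⟩
      show forceOn (extend Λ (Function.update σr ⟨x, hx⟩ true)) {x} true ∈ A
      rw [forceOn_eq_self hτ'x, hup]
      exact hInc _ _ hτA (le_forceOn_true _ x)
    have ha : 0 < S Λ β (fun _ => 0) (fun _ => h) (Ap ∩ {σ : Config | σ x = true}) :=
      S_pos _ _ _ _ _ hmema
    have hb := S_nonneg Λ β (fun _ => (0 : ℤ)) (fun _ => h) (Ap ∩ {σ : Config | σ x = false})
    have hc := S_nonneg Λ β (fun _ => (0 : ℤ)) (fun _ => h) (Am ∩ {σ : Config | σ x = true})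
    rw [prob_eq, covar_spin_ind, covar_spin_ind, covar_spin_ind, condProb_eq, condProb_eq,
      condProb_eq, condProb_eq,
      S_congr _ _ _ _ (Set.inter_comm ({σ : Config | σ x = true}) Ap),
      S_congr _ _ _ _ (Set.inter_comm ({σ : Config | σ x = false}) Am),
      S_congr _ _ _ _ (Set.inter_comm ({σ : Config | σ x = true}) A),
      S_congr _ _ _ _ (Set.inter_comm ({σ : Config | σ x = false}) A),
      S_congr _ _ _ _ e1, S_congr _ _ _ _ e2, hSpiv, hSAp, hSAm, hSA, hZeq]
    exact alg2 _ _ _ _ _ _ ha.ne' hd.ne'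
      (by positivity) (by positivity) (by positivity) hZ'


end Ising
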